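/- Let k be an algebraically closed field of characteristic 0 and V^• = ⊕_{i=0}^m V^i a graded k-vector space with dim V^i = n_i. For every r ∈ R, the Zariski closure of the stratum C°_r(V^•) = { D ∈ C(V^•) : rk D_i = r_{i+1} ∀i } inside the affine space ∏_i Hom(V^i, V^{i+1}) is C_r(V^•) = { D ∈ C(V^•) : rk D_i ≤ r_{i+1} ∀i }; equivalently, the zero locus of the vanishing ideal of C°_r(V^•) equals C_r(V^•). -/

import Mathlib

/-!
STATEMENT 15: Over an algebraically closed field k of characteristic 0, for r ∈ R the
Zariski closure of the stratum C°_r(V^•) = {D : rk D_i = r_{i+1} ∀i} inside the affine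
space ∏_i Hom(V^i, V^{i+1}) is C_r(V^•) = {D ∈ C(V^•) : rk D_i ≤ r_{i+1} ∀i}: the common
zero locus of all polynomial functions vanishing on C°_r(V^•) equals C_r(V^•).

The affine space is modeled by collections of matrices D_i ∈ Mat_{n_{i+1} × n_i}(k),
and polynomial functions by multivariate polynomials in the matrix entries.
-/

/-- Membership in the set R. -/
def memR (m : ℕ) (n r : ℕ → ℕ) : Prop :=
  r 0 = 0 ∧ (∀ i, i > m → r i = 0) ∧ ∀ i ≤ m, r i + r (i + 1) ≤ n i

/-!
The set `C_r` is cut out by polynomials vanishing on the stratum: the entries of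
`D (i + 1) * D i` and the `(r (i + 1) + 1)`-minors of `D i`. So the closure of the stratum lies in
`C_r`.

Conversely, let `D ∈ C_r` with boundaries `B_i = im D_{i-1}`. Inside `ker D_i` choose `T_i`
transverse to `B_i` with `dim (B_i ⊕ T_i) = r_i`, and let `E_i` vanish on `B_i ⊕ T_i` and map a
subspace of `ker D_i` onto `T_{i+1}`. For `t ≠ 0`, `D + t E` is a complex and
`im (D_i + t E_i) = B_{i+1} ⊕ T_{i+1}` has dimension `r_{i+1}`. A polynomial vanishing on the
stratum therefore vanishes on the line `D + t E` off `t = 0`, hence at `D`, since `k` is infinite.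
-/

open Module Submodule

namespace Matrix

variable {k : Type*} [Field k] {m n : Type*} [Fintype m] [Fintype n]

theorem exists_linearIndependent_rows_of_le_rank (M : Matrix m n k) {d : ℕ} (hd : d ≤ M.rank) :
    ∃ f : Fin d → m, LinearIndependent k (fun i => M (f i)) := by
  classical
  obtain ⟨b, -, -, hspan, hli⟩ := exists_linearIndepOn_extension (K := k) (v := M.row)
    (linearIndepOn_empty k M.row) (Set.empty_subset Set.univ)
  have hcard : M.rank ≤ Fintype.card b := by
    rw [rank_eq_finrank_span_row, ← finrank_span_eq_card hli, ← Set.image_univ,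
      ← Set.image_eq_range]
    exact Submodule.finrank_mono (span_le.2 hspan)
  obtain ⟨g⟩ : Nonempty (Fin d ↪ b) :=
    Function.Embedding.nonempty_of_card_le (by simpa using hd.trans hcard)
  exact ⟨fun i => g i, hli.comp g g.injective⟩

theorem exists_det_submatrix_ne_zero_of_le_rank [DecidableEq m] [DecidableEq n]
    (M : Matrix m n k) {d : ℕ} (hd : d ≤ M.rank) :
    ∃ (f : Fin d → m) (g : Fin d → n), (M.submatrix f g).det ≠ 0 := by
  obtain ⟨f, hf⟩ := M.exists_linearIndependent_rows_of_le_rank hd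
  have hrank : (M.submatrix f id)ᵀ.rank = d := by
    rw [rank_transpose, LinearIndependent.rank_matrix (M := M.submatrix f id) hf,
      Fintype.card_fin]
  obtain ⟨g, hg⟩ := (M.submatrix f id)ᵀ.exists_linearIndependent_rows_of_le_rank hrank.ge
  have hunit : IsUnit (M.submatrix f g)ᵀ := linearIndependent_rows_iff_isUnit.1 hg
  exact ⟨f, g, by simpa only [det_transpose] using ((isUnit_iff_isUnit_det _).1 hunit).ne_zero⟩

theorem rank_lt_iff_forall_det_submatrix_eq_zero [DecidableEq m] [DecidableEq n]
    (M : Matrix m n k) (d : ℕ) :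
    M.rank < d ↔ ∀ (f : Fin d → m) (g : Fin d → n), (M.submatrix f g).det = 0 := by
  refine ⟨fun h f g => ?_, fun h => ?_⟩
  · by_contra hdet
    have hsub := rank_submatrix_le M f g
    rw [rank_of_isUnit _ ((isUnit_iff_isUnit_det _).2 (Ne.isUnit hdet)), Fintype.card_fin] at hsub
    omega
  · by_contra! hd
    obtain ⟨f, g, hfg⟩ := M.exists_det_submatrix_ne_zero_of_le_rank hd
    exact hfg (h f g)

end Matrix

section LinearAlgebra

variable {k V W : Type*} [Field k] [AddCommGroup V] [Module k V] [AddCommGroup W] [Module k W]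

theorem LinearMap.range_add_smul_eq_sup {f g : V →ₗ[k] W} (h : ker f ⊔ ker g = ⊤) {t : k}
    (ht : t ≠ 0) : range (f + t • g) = range f ⊔ range g := by
  refine le_antisymm ((range_add_le _ _).trans (sup_le_sup_left (range_smul_le_range _ _) _)) ?_
  have hsplit (x : V) : ∃ a ∈ ker g, ∃ b ∈ ker f, a + b = x :=
    mem_sup.1 (show x ∈ ker g ⊔ ker f by simp [sup_comm, h])
  refine sup_le ?_ ?_ <;> rintro _ ⟨x, rfl⟩ <;> obtain ⟨a, ha, b, hb, rfl⟩ := hsplit x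
  · exact ⟨a, by simp_all⟩
  · exact ⟨t⁻¹ • b, by simp_all [smul_smul]⟩

theorem LinearMap.ker_inf_ker_le_ker_add_smul (f g : V →ₗ[k] W) (t : k) :
    ker f ⊓ ker g ≤ ker (f + t • g) := by
  rintro x ⟨hf, hg⟩
  simp_all

theorem Submodule.exists_le_finrank_eq (K : Submodule k V) {d : ℕ} (hd : d ≤ finrank k K) :
    ∃ S ≤ K, finrank k S = d := by
  obtain ⟨v, hv⟩ := exists_linearIndependent_of_le_finrank hd
  refine ⟨span k (Set.range (K.subtype ∘ v)), ?_, ?_⟩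
  · rw [span_le, Set.range_comp]
    exact fun _ ⟨y, _, hy⟩ => hy ▸ y.2
  · rw [finrank_span_eq_card (hv.map' K.subtype K.ker_subtype), Fintype.card_fin]

variable [FiniteDimensional k V]

theorem Submodule.exists_le_disjoint_finrank_eq {A K : Submodule k V} (hAK : A ≤ K) {d : ℕ}
    (hd : finrank k A + d ≤ finrank k K) : ∃ S ≤ K, Disjoint A S ∧ finrank k S = d := by
  obtain ⟨A', hdisj, rfl⟩ := IsModularLattice.exists_disjoint_and_sup_eq hAK
  have hdim := finrank_sup_add_finrank_inf_eq A A'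
  rw [disjoint_iff.1 hdisj, finrank_bot] at hdim
  obtain ⟨S, hSA', hS⟩ := A'.exists_le_finrank_eq (d := d) (by omega)
  exact ⟨S, hSA'.trans le_sup_right, hdisj.mono_right hSA', hS⟩

variable [FiniteDimensional k W]

theorem LinearMap.exists_le_ker_range_eq {A K : Submodule k V} (T : Submodule k W)
    (hAK : A ≤ K) (hd : finrank k A + finrank k T ≤ finrank k K) :
    ∃ e : V →ₗ[k] W, A ≤ ker e ∧ range e = T ∧ ker e ⊔ K = ⊤ := by
  obtain ⟨S, hSK, hAS, hS⟩ := exists_le_disjoint_finrank_eq hAK hd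
  obtain ⟨U, hAU, hSU⟩ := hAS.exists_isCompl
  let e : V →ₗ[k] W := T.subtype ∘ₗ (LinearEquiv.ofFinrankEq S T hS).toLinearMap ∘ₗ
    S.projectionOnto U hSU.symm
  have hker : ker e = U := by
    simp only [e, ker_comp, ker_subtype, comap_bot, LinearEquiv.ker, ker_projectionOnto]
  refine ⟨e, hker ▸ hAU, ?_, ?_⟩
  · simp only [e, range_comp, range_projectionOnto, Submodule.map_top, LinearEquiv.range,
      range_subtype]
  · exact eq_top_iff.2 (hSU.sup_eq_top ▸ sup_le (hker ▸ le_sup_left) (hSK.trans le_sup_right))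

end LinearAlgebra

namespace LinearMap

variable {k : Type*} [Field k] {V : ℕ → Type*} [∀ i, AddCommGroup (V i)]
  [∀ i, Module k (V i)]

def boundaries (f : ∀ i, V i →ₗ[k] V (i + 1)) : ∀ i, Submodule k (V i)
  | 0 => ⊥
  | j + 1 => range (f j)

variable (f : ∀ i, V i →ₗ[k] V (i + 1))

@[simp]
theorem boundaries_succ (i : ℕ) : boundaries f (i + 1) = range (f i) := rfl

theorem boundaries_le_ker (hf : ∀ i, f (i + 1) ∘ₗ f i = 0) (i : ℕ) :
    boundaries f i ≤ ker (f i) := by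
  cases i with
  | zero => exact bot_le
  | succ j => exact range_le_ker_iff.2 (hf j)

theorem finrank_boundaries_le {r : ℕ → ℕ} (hfr : ∀ i, finrank k (range (f i)) ≤ r (i + 1))
    (i : ℕ) : finrank k (boundaries f i) ≤ r i := by
  cases i with
  | zero => exact (finrank_bot k (V 0)).trans_le (Nat.zero_le _)
  | succ j => exact hfr j

theorem add_smul_comp_add_smul_eq_zero (e : ∀ i, V i →ₗ[k] V (i + 1))
    (hker : ∀ i, ker (f i) ⊔ ker (e i) = ⊤)
    (hrange : ∀ i, range (f i) ⊔ range (e i) ≤ ker (f (i + 1)) ⊓ ker (e (i + 1)))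
    {t : k} (ht : t ≠ 0) (i : ℕ) :
    (f (i + 1) + t • e (i + 1)) ∘ₗ (f i + t • e i) = 0 := by
  rw [← range_le_ker_iff, range_add_smul_eq_sup (hker i) ht]
  exact (hrange i).trans (ker_inf_ker_le_ker_add_smul _ _ t)

variable [∀ i, FiniteDimensional k (V i)]

theorem exists_perturbation_data (hf : ∀ i, f (i + 1) ∘ₗ f i = 0) (r : ℕ → ℕ)
    (hr : ∀ i, r i + r (i + 1) ≤ finrank k (V i))
    (hfr : ∀ i, finrank k (range (f i)) ≤ r (i + 1)) :
    ∃ e : ∀ i, V i →ₗ[k] V (i + 1), (∀ i, ker (f i) ⊔ ker (e i) = ⊤) ∧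
      (∀ i, range (f i) ⊔ range (e i) ≤ ker (f (i + 1)) ⊓ ker (e (i + 1))) ∧
      (∀ i, Disjoint (range (f i)) (range (e i))) ∧
      ∀ i, finrank k (range (f i)) + finrank k (range (e i)) = r (i + 1) := by
  have hBK := boundaries_le_ker f hf
  have hdims (i : ℕ) : finrank k (boundaries f i) ≤ r i ∧
      finrank k (range (f i)) + finrank k (ker (f i)) = finrank k (V i) ∧
      finrank k (range (f i)) ≤ r (i + 1) ∧ r i + r (i + 1) ≤ finrank k (V i) :=
    ⟨finrank_boundaries_le f hfr i, (f i).finrank_range_add_finrank_ker, hfr i, hr i⟩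
  -- `boundaries f i ⊔ T i` is to become the image of the perturbed differential into `V i`.
  choose T hTK hBT hT using fun i => exists_le_disjoint_finrank_eq (hBK i)
    (d := r i - finrank k (boundaries f i)) (by have := hdims i; omega)
  have hBT_dim (i : ℕ) : finrank k ↥(boundaries f i ⊔ T i) = r i := by
    have := finrank_sup_add_finrank_inf_eq (boundaries f i) (T i)
    rw [disjoint_iff.1 (hBT i), finrank_bot, hT i] at this
    have := hdims i
    omega
  choose e hBTe he hKe using fun i => exists_le_ker_range_eq (T (i + 1))
    (sup_le (hBK i) (hTK i)) (by rw [hBT_dim, hT, boundaries_succ]; have := hdims i; omega)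
  refine ⟨e, fun i => sup_comm (ker (e i)) _ ▸ hKe i, fun i => ?_, fun i => ?_, fun i => ?_⟩
  · rw [he]
    exact le_inf (sup_le (hBK (i + 1)) (hTK (i + 1))) (hBTe (i + 1))
  · rw [he]
    exact hBT (i + 1)
  · rw [he, hT, boundaries_succ]
    have := hfr i
    omega

theorem exists_perturbation (hf : ∀ i, f (i + 1) ∘ₗ f i = 0) (r : ℕ → ℕ)
    (hr : ∀ i, r i + r (i + 1) ≤ finrank k (V i))
    (hfr : ∀ i, finrank k (range (f i)) ≤ r (i + 1)) :
    ∃ e : ∀ i, V i →ₗ[k] V (i + 1), ∀ t : k, t ≠ 0 →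
      (∀ i, (f (i + 1) + t • e (i + 1)) ∘ₗ (f i + t • e i) = 0) ∧
      ∀ i, finrank k (range (f i + t • e i)) = r (i + 1) := by
  obtain ⟨e, hker, hrange, hdisj, hdim⟩ := exists_perturbation_data f hf r hr hfr
  refine ⟨e, fun t ht => ⟨add_smul_comp_add_smul_eq_zero f e hker hrange ht, fun i => ?_⟩⟩
  have := finrank_sup_add_finrank_inf_eq (range (f i)) (range (e i))
  rw [disjoint_iff.1 (hdisj i), finrank_bot] at this
  rw [range_add_smul_eq_sup (hker i) ht, ← hdim i]
  omega

end LinearMap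

theorem MvPolynomial.eval_eq_zero_of_forall_add_smul {σ k : Type*} [Field k] [Infinite k]
    (p : MvPolynomial σ k) (x y : σ → k) (h : ∀ t : k, t ≠ 0 → eval (x + t • y) p = 0) :
    eval x p = 0 := by
  let q : Polynomial k :=
    aeval (fun s => Polynomial.C (x s) + Polynomial.X * Polynomial.C (y s)) p
  have hq (t : k) : q.eval t = eval (x + t • y) p := by
    rw [← Polynomial.coe_aeval_eq_eval, ← AlgHom.comp_apply, comp_aeval, ← aeval_eq_eval]
    congr
    funext s
    simpa using mul_comm (y s) t
  have hq0 : q = 0 := Polynomial.eq_zero_of_infinite_isRoot q <|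
    (Set.finite_singleton 0).infinite_compl.mono fun t ht => by simpa [hq] using h t ht
  simpa [hq0] using (hq 0).symm

namespace VarietyOfComplexes

open MvPolynomial

variable {k : Type*} [Field k] {n : ℕ → ℕ}

variable (k n) in
abbrev Differentials : Type _ := ∀ i : ℕ, Matrix (Fin (n (i + 1))) (Fin (n i)) k

variable (n) in
abbrev MatrixCoord : Type := (i : ℕ) × (Fin (n (i + 1)) × Fin (n i))

def entries (D : Differentials k n) : MatrixCoord n → k := fun v => D v.1 v.2.1 v.2.2

theorem entries_add_smul (D E : Differentials k n) (t : k) :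
    entries (D + t • E) = entries D + t • entries E :=
  rfl

def zariskiClosure (S : Set (Differentials k n)) : Set (Differentials k n) :=
  {D | ∀ p : MvPolynomial (MatrixCoord n) k, (∀ E ∈ S, eval (entries E) p = 0) →
    eval (entries D) p = 0}

theorem zariskiClosure_mono {S T : Set (Differentials k n)} (h : S ⊆ T) :
    zariskiClosure S ⊆ zariskiClosure T :=
  fun _ hD p hp => hD p fun E hE => hp E (h hE)

variable (k n) in
def complexesRankLE (r : ℕ → ℕ) : Set (Differentials k n) :=
  {D | (∀ i, D (i + 1) * D i = 0) ∧ ∀ i, (D i).rank ≤ r (i + 1)}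

variable (k n) in
def complexesRankEq (r : ℕ → ℕ) : Set (Differentials k n) :=
  {D | (∀ i, D (i + 1) * D i = 0) ∧ ∀ i, (D i).rank = r (i + 1)}

theorem complexesRankEq_subset_complexesRankLE (r : ℕ → ℕ) :
    complexesRankEq k n r ⊆ complexesRankLE k n r :=
  fun _ ⟨hc, hr⟩ => ⟨hc, fun i => (hr i).le⟩

noncomputable def compEntry (i : ℕ) (a : Fin (n (i + 1 + 1))) (b : Fin (n i)) :
    MvPolynomial (MatrixCoord n) k :=
  ∑ c : Fin (n (i + 1)), X ⟨i + 1, (a, c)⟩ * X ⟨i, (c, b)⟩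

theorem eval_compEntry (D : Differentials k n) (i : ℕ) (a : Fin (n (i + 1 + 1)))
    (b : Fin (n i)) : eval (entries D) (compEntry i a b) = (D (i + 1) * D i) a b := by
  simp [compEntry, entries, Matrix.mul_apply]

noncomputable def minor (i : ℕ) {d : ℕ} (f : Fin d → Fin (n (i + 1)))
    (g : Fin d → Fin (n i)) : MvPolynomial (MatrixCoord n) k :=
  (Matrix.of fun a b => X ⟨i, (f a, g b)⟩).det

theorem eval_minor (D : Differentials k n) (i : ℕ) {d : ℕ} (f : Fin d → Fin (n (i + 1)))
    (g : Fin d → Fin (n i)) : eval (entries D) (minor i f g) = ((D i).submatrix f g).det := by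
  rw [minor, RingHom.map_det]
  congr 1
  ext a b
  simp [entries]

theorem zariskiClosure_complexesRankLE (r : ℕ → ℕ) :
    zariskiClosure (complexesRankLE k n r) ⊆ complexesRankLE k n r := by
  intro D hD
  refine ⟨fun i => ?_, fun i => ?_⟩
  · ext a b
    rw [← eval_compEntry, Matrix.zero_apply]
    exact hD _ fun E hE => by rw [eval_compEntry, hE.1 i, Matrix.zero_apply]
  · rw [← Nat.lt_succ_iff, Matrix.rank_lt_iff_forall_det_submatrix_eq_zero]
    intro f g
    rw [← eval_minor]
    refine hD _ fun E hE => ?_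
    rw [eval_minor,
      ((E i).rank_lt_iff_forall_det_submatrix_eq_zero _).1 (Nat.lt_succ_of_le (hE.2 i))]

theorem exists_add_smul_mem_complexesRankEq {r : ℕ → ℕ} (hr : ∀ i, r i + r (i + 1) ≤ n i)
    {D : Differentials k n} (hD : D ∈ complexesRankLE k n r) :
    ∃ E : Differentials k n, ∀ t : k, t ≠ 0 → D + t • E ∈ complexesRankEq k n r := by
  obtain ⟨e, he⟩ := LinearMap.exists_perturbation (fun i => Matrix.toLin' (D i))
    (fun i => by rw [← Matrix.toLin'_mul, hD.1 i, map_zero]) r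
    (fun i => by simpa using hr i) hD.2
  refine ⟨fun i => LinearMap.toMatrix' (e i), fun t ht => ?_⟩
  have hlin (i : ℕ) : Matrix.toLin' (D i + t • LinearMap.toMatrix' (e i)) =
      Matrix.toLin' (D i) + t • e i := by
    rw [map_add, map_smul, Matrix.toLin'_toMatrix']
  refine ⟨fun i => Matrix.toLin'.injective ?_, fun i => ?_⟩
  · rw [Pi.add_apply, Pi.add_apply, Pi.smul_apply, Pi.smul_apply, Matrix.toLin'_mul, hlin, hlin,
      map_zero]
    exact (he t ht).1 i
  · rw [Pi.add_apply, Pi.smul_apply, Matrix.rank, ← Matrix.toLin'_apply', hlin]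
    exact (he t ht).2 i

theorem complexesRankLE_subset_zariskiClosure [Infinite k] {r : ℕ → ℕ}
    (hr : ∀ i, r i + r (i + 1) ≤ n i) :
    complexesRankLE k n r ⊆ zariskiClosure (complexesRankEq k n r) := by
  intro D hD p hp
  obtain ⟨E, hE⟩ := exists_add_smul_mem_complexesRankEq hr hD
  refine eval_eq_zero_of_forall_add_smul p _ (entries E) fun t ht => ?_
  exact entries_add_smul D E t ▸ hp _ (hE t ht)

end VarietyOfComplexes

theorem stmt_15_general
    (k : Type*) [Field k] [IsAlgClosed k]
    (m : ℕ) (n : ℕ → ℕ) (hn : ∀ i, i > m → n i = 0)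
    (r : ℕ → ℕ) (hr : memR m n r) :
    {D : ∀ i : ℕ, Matrix (Fin (n (i + 1))) (Fin (n i)) k |
        ∀ p : MvPolynomial ((i : ℕ) × (Fin (n (i + 1)) × Fin (n i))) k,
          (∀ E : ∀ i : ℕ, Matrix (Fin (n (i + 1))) (Fin (n i)) k,
            ((∀ i, E (i + 1) * E i = 0) ∧ (∀ i, (E i).rank = r (i + 1))) →
            MvPolynomial.eval (fun v => E v.1 v.2.1 v.2.2) p = 0) →
          MvPolynomial.eval (fun v => D v.1 v.2.1 v.2.2) p = 0} =
    {D : ∀ i : ℕ, Matrix (Fin (n (i + 1))) (Fin (n i)) k |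
        (∀ i, D (i + 1) * D i = 0) ∧ ∀ i, (D i).rank ≤ r (i + 1)} := by
  obtain ⟨-, hr_top, hr_le⟩ := hr
  have hrn (i : ℕ) : r i + r (i + 1) ≤ n i := by
    rcases le_or_gt i m with h | h
    · exact hr_le i h
    · simp [hr_top i h, hr_top (i + 1) (by omega), hn i h]
  open VarietyOfComplexes in
  change zariskiClosure (complexesRankEq k n r) = complexesRankLE k n r
  exact ((zariskiClosure_mono (complexesRankEq_subset_complexesRankLE r)).trans
    (zariskiClosure_complexesRankLE r)).antisymm (complexesRankLE_subset_zariskiClosure hrn)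

theorem stmt_15
    (k : Type*) [Field k] [IsAlgClosed k] [CharZero k]
    (m : ℕ) (n : ℕ → ℕ) (hn : ∀ i, i > m → n i = 0)
    (r : ℕ → ℕ) (hr : memR m n r) :
    {D : ∀ i : ℕ, Matrix (Fin (n (i + 1))) (Fin (n i)) k |
        ∀ p : MvPolynomial ((i : ℕ) × (Fin (n (i + 1)) × Fin (n i))) k,
          (∀ E : ∀ i : ℕ, Matrix (Fin (n (i + 1))) (Fin (n i)) k,
            ((∀ i, E (i + 1) * E i = 0) ∧ (∀ i, (E i).rank = r (i + 1))) →
            MvPolynomial.eval (fun v => E v.1 v.2.1 v.2.2) p = 0) →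
          MvPolynomial.eval (fun v => D v.1 v.2.1 v.2.2) p = 0} =
    {D : ∀ i : ℕ, Matrix (Fin (n (i + 1))) (Fin (n i)) k |
        (∀ i, D (i + 1) * D i = 0) ∧ ∀ i, (D i).rank ≤ r (i + 1)} :=
  stmt_15_general k m n hn r hr
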